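/- For integers n, m ≥ 2, the F-index of the edge S-join of the path P_n and the path P_m is F(P_n ∨̱_S P_m) = (n − 1){(m + 2)³ + 6(m − 1)(n − 1) + m(n − 1)²} + 12mn − 4m − 10n − 10. -/

import Mathlib

/-- The subdivision graph `S(G)`: a new vertex is inserted into each edge of `G`
(each edge is replaced by a path of length 2). The inserted vertices form the
right summand `↥G.edgeSet`. -/
def Sgraph {V : Type*} (G : SimpleGraph V) : SimpleGraph (V ⊕ ↥G.edgeSet) where
  Adj x y :=
    match x, y with
    | Sum.inl v, Sum.inr e => v ∈ (e : Sym2 V)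
    | Sum.inr e, Sum.inl v => v ∈ (e : Sym2 V)
    | _, _ => False
  symm := by constructor; rintro (v | e) (w | f) h <;> exact h
  loopless := by constructor; rintro (v | e) h <;> exact h

/-- The graph `R(G)`: obtained from `G` by inserting a new vertex into each edge of `G`
and joining each new vertex to the end vertices of its corresponding edge. -/
def Rgraph {V : Type*} (G : SimpleGraph V) : SimpleGraph (V ⊕ ↥G.edgeSet) where
  Adj x y :=
    match x, y with
    | Sum.inl v, Sum.inl w => G.Adj v w
    | Sum.inl v, Sum.inr e => v ∈ (e : Sym2 V)
    | Sum.inr e, Sum.inl v => v ∈ (e : Sym2 V)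
    | Sum.inr _, Sum.inr _ => False
  symm := by
    constructor
    rintro (v | e) (w | f) h
    · exact G.adj_symm h
    · exact h
    · exact h
    · exact h
  loopless := by
    constructor
    rintro (v | e) h
    · exact G.irrefl h
    · exact h

/-- The graph `Q(G)`: obtained from `G` by inserting a new vertex into each edge of `G`,
then joining by edges those pairs of new vertices lying on adjacent edges of `G`. -/
def Qgraph {V : Type*} (G : SimpleGraph V) : SimpleGraph (V ⊕ ↥G.edgeSet) where
  Adj x y :=
    match x, y with
    | Sum.inl _, Sum.inl _ => False
    | Sum.inl v, Sum.inr e => v ∈ (e : Sym2 V)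
    | Sum.inr e, Sum.inl v => v ∈ (e : Sym2 V)
    | Sum.inr e, Sum.inr f => e ≠ f ∧ ∃ v, v ∈ (e : Sym2 V) ∧ v ∈ (f : Sym2 V)
  symm := by
    constructor
    rintro (v | e) (w | f) h
    · exact h
    · exact h
    · exact h
    · exact ⟨h.1.symm, by obtain ⟨v, h1, h2⟩ := h.2; exact ⟨v, h2, h1⟩⟩
  loopless := by
    constructor
    rintro (v | e) h
    · exact h
    · exact h.1 rfl

/-- The total graph `T(G)`: obtained from `G` by inserting a new vertex into each edge,
joining each new vertex to the end vertices of its corresponding edge, and joining by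
edges those pairs of new vertices lying on adjacent edges of `G`. -/
def Tgraph {V : Type*} (G : SimpleGraph V) : SimpleGraph (V ⊕ ↥G.edgeSet) where
  Adj x y :=
    match x, y with
    | Sum.inl v, Sum.inl w => G.Adj v w
    | Sum.inl v, Sum.inr e => v ∈ (e : Sym2 V)
    | Sum.inr e, Sum.inl v => v ∈ (e : Sym2 V)
    | Sum.inr e, Sum.inr f => e ≠ f ∧ ∃ v, v ∈ (e : Sym2 V) ∧ v ∈ (f : Sym2 V)
  symm := by
    constructor
    rintro (v | e) (w | f) h
    · exact G.adj_symm h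
    · exact h
    · exact h
    · exact ⟨h.1.symm, by obtain ⟨v, h1, h2⟩ := h.2; exact ⟨v, h2, h1⟩⟩
  loopless := by
    constructor
    rintro (v | e) h
    · exact G.irrefl h
    · exact h.1 rfl

/-- The disjoint union of `H` and `K` together with all edges joining a vertex `a` of `H`
with `P a` to every vertex of `K`. -/
def joinOn {A B : Type*} (H : SimpleGraph A) (K : SimpleGraph B) (P : A → Prop) :
    SimpleGraph (A ⊕ B) where
  Adj x y :=
    match x, y with
    | Sum.inl a, Sum.inl a' => H.Adj a a'
    | Sum.inr b, Sum.inr b' => K.Adj b b'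
    | Sum.inl a, Sum.inr _ => P a
    | Sum.inr _, Sum.inl a => P a
  symm := by
    constructor
    rintro (a | b) (a' | b') h
    · exact H.adj_symm h
    · exact h
    · exact h
    · exact K.adj_symm h
  loopless := by
    constructor
    rintro (a | b) h
    · exact H.irrefl h
    · exact K.irrefl h

/-- The vertex S-join `G₁ ∨̇_S G₂`: obtained from `S(G₁)` and `G₂` by joining each vertex
of `V(G₁)` to every vertex of `G₂`. -/
def vertexSJoin {V₁ V₂ : Type*} (G₁ : SimpleGraph V₁) (G₂ : SimpleGraph V₂) :
    SimpleGraph ((V₁ ⊕ ↥G₁.edgeSet) ⊕ V₂) :=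
  joinOn (Sgraph G₁) G₂ (fun x => x.isLeft)

/-- The edge S-join `G₁ ∨̱_S G₂`: obtained from `S(G₁)` and `G₂` by joining each inserted
vertex (each vertex of `I(G₁)`) to every vertex of `G₂`. -/
def edgeSJoin {V₁ V₂ : Type*} (G₁ : SimpleGraph V₁) (G₂ : SimpleGraph V₂) :
    SimpleGraph ((V₁ ⊕ ↥G₁.edgeSet) ⊕ V₂) :=
  joinOn (Sgraph G₁) G₂ (fun x => x.isRight)

/-- The vertex R-join `G₁ ∨̇_R G₂`. -/
def vertexRJoin {V₁ V₂ : Type*} (G₁ : SimpleGraph V₁) (G₂ : SimpleGraph V₂) :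
    SimpleGraph ((V₁ ⊕ ↥G₁.edgeSet) ⊕ V₂) :=
  joinOn (Rgraph G₁) G₂ (fun x => x.isLeft)

/-- The edge R-join `G₁ ∨̱_R G₂`. -/
def edgeRJoin {V₁ V₂ : Type*} (G₁ : SimpleGraph V₁) (G₂ : SimpleGraph V₂) :
    SimpleGraph ((V₁ ⊕ ↥G₁.edgeSet) ⊕ V₂) :=
  joinOn (Rgraph G₁) G₂ (fun x => x.isRight)

/-- The vertex Q-join `G₁ ∨̇_Q G₂`. -/
def vertexQJoin {V₁ V₂ : Type*} (G₁ : SimpleGraph V₁) (G₂ : SimpleGraph V₂) :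
    SimpleGraph ((V₁ ⊕ ↥G₁.edgeSet) ⊕ V₂) :=
  joinOn (Qgraph G₁) G₂ (fun x => x.isLeft)

/-- The edge Q-join `G₁ ∨̱_Q G₂`. -/
def edgeQJoin {V₁ V₂ : Type*} (G₁ : SimpleGraph V₁) (G₂ : SimpleGraph V₂) :
    SimpleGraph ((V₁ ⊕ ↥G₁.edgeSet) ⊕ V₂) :=
  joinOn (Qgraph G₁) G₂ (fun x => x.isRight)

/-- The vertex T-join `G₁ ∨̇_T G₂`. -/
def vertexTJoin {V₁ V₂ : Type*} (G₁ : SimpleGraph V₁) (G₂ : SimpleGraph V₂) :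
    SimpleGraph ((V₁ ⊕ ↥G₁.edgeSet) ⊕ V₂) :=
  joinOn (Tgraph G₁) G₂ (fun x => x.isLeft)

/-- The edge T-join `G₁ ∨̱_T G₂`. -/
def edgeTJoin {V₁ V₂ : Type*} (G₁ : SimpleGraph V₁) (G₂ : SimpleGraph V₂) :
    SimpleGraph ((V₁ ⊕ ↥G₁.edgeSet) ⊕ V₂) :=
  joinOn (Tgraph G₁) G₂ (fun x => x.isRight)

/-- Degree of a vertex in a graph on a finite vertex type. -/
noncomputable def gdeg {V : Type*} [Finite V] (G : SimpleGraph V) (v : V) : ℕ :=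
  haveI : Fintype ↥(G.neighborSet v) := Fintype.ofFinite _
  G.degree v

/-- The forgotten topological index (F-index): `F(G) = ∑_{v ∈ V(G)} d_G(v)³`. -/
noncomputable def Findex {V : Type*} [Finite V] (G : SimpleGraph V) : ℕ :=
  haveI := Fintype.ofFinite V
  ∑ v : V, gdeg G v ^ 3

/-- The first Zagreb index: `M₁(G) = ∑_{v ∈ V(G)} d_G(v)²`. -/
noncomputable def M1 {V : Type*} [Finite V] (G : SimpleGraph V) : ℕ :=
  haveI := Fintype.ofFinite V
  ∑ v : V, gdeg G v ^ 2

/-- `M₄(G) = ∑_{v ∈ V(G)} d_G(v)⁴`. -/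
noncomputable def M4 {V : Type*} [Finite V] (G : SimpleGraph V) : ℕ :=
  haveI := Fintype.ofFinite V
  ∑ v : V, gdeg G v ^ 4

/-- The hyper Zagreb index: `HM(G) = ∑_{uv ∈ E(G)} (d_G(u) + d_G(v))²`. -/
noncomputable def HM {V : Type*} [Finite V] (G : SimpleGraph V) : ℕ :=
  haveI : Fintype ↥G.edgeSet := Fintype.ofFinite _
  ∑ e : ↥G.edgeSet,
    Sym2.lift ⟨fun u v => (gdeg G u + gdeg G v) ^ 2,
      fun u v => by dsimp only; rw [add_comm]⟩ (e : Sym2 V)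

/-- The redefined Zagreb index:
`ReZM(G) = ∑_{uv ∈ E(G)} d_G(u) d_G(v) (d_G(u) + d_G(v))`. -/
noncomputable def ReZM {V : Type*} [Finite V] (G : SimpleGraph V) : ℕ :=
  haveI : Fintype ↥G.edgeSet := Fintype.ofFinite _
  ∑ e : ↥G.edgeSet,
    Sym2.lift ⟨fun u v => gdeg G u * gdeg G v * (gdeg G u + gdeg G v),
      fun u v => by dsimp only; ring⟩ (e : Sym2 V)

/-- The number of edges of `G`. -/
noncomputable def numEdges {V : Type*} (G : SimpleGraph V) : ℕ :=
  Nat.card ↥G.edgeSet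

/-! In `G₁ ∨̱_S G₂` a vertex of `G₁` keeps its degree, an inserted vertex is adjacent to the two
ends of its edge and to all of `G₂`, and a vertex of `G₂` gains one neighbour per edge of `G₁`.
So the F-index splits into three sums, which for paths are evaluated from the degree sequence
`1, 2, …, 2, 1` of `P_n` and `|E(P_n)| = n - 1`. -/

open SimpleGraph

section Degree

variable {V : Type*} [Finite V] (G : SimpleGraph V)

lemma gdeg_eq_degree (v : V) [Fintype (G.neighborSet v)] : gdeg G v = G.degree v := by
  rw [gdeg]; congr!

lemma gdeg_eq_natCard_neighborSet (v : V) : gdeg G v = Nat.card (G.neighborSet v) := by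
  have := Fintype.ofFinite (G.neighborSet v)
  rw [gdeg_eq_degree, ← card_neighborSet_eq_degree, Nat.card_eq_fintype_card]

lemma Findex_eq_sum [Fintype V] : Findex G = ∑ v, gdeg G v ^ 3 := by
  rw [Findex]; congr!

end Degree

lemma numEdges_eq_card_edgeFinset {V : Type*} (G : SimpleGraph V) [Fintype G.edgeSet] :
    numEdges G = G.edgeFinset.card := by
  rw [numEdges, Nat.card_eq_fintype_card, edgeFinset_card]

lemma gdeg_eq_card_adj_inl_add_card_adj_inr {A B : Type*} [Finite A] [Finite B]
    (G : SimpleGraph (A ⊕ B)) (x : A ⊕ B) :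
    gdeg G x = Nat.card {a // G.Adj x (.inl a)} + Nat.card {b // G.Adj x (.inr b)} := by
  rw [gdeg_eq_natCard_neighborSet, ← Nat.card_sum]
  exact Nat.card_congr Equiv.subtypeSum

section JoinOn

variable {A B : Type*} [Finite A] [Finite B] (H : SimpleGraph A) (K : SimpleGraph B) (P : A → Prop)

lemma gdeg_joinOn_inl_of_pos {a : A} (ha : P a) :
    gdeg (joinOn H K P) (.inl a) = gdeg H a + Nat.card B := by
  rw [gdeg_eq_card_adj_inl_add_card_adj_inr, gdeg_eq_natCard_neighborSet]
  exact congrArg₂ _ rfl (Nat.card_congr (Equiv.subtypeUnivEquiv fun _ => ha))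

lemma gdeg_joinOn_inl_of_neg {a : A} (ha : ¬P a) :
    gdeg (joinOn H K P) (.inl a) = gdeg H a := by
  rw [gdeg_eq_card_adj_inl_add_card_adj_inr, gdeg_eq_natCard_neighborSet]
  exact congrArg₂ _ rfl (@Nat.card_of_isEmpty {_b : B // P a} ⟨fun b => ha b.2⟩)

lemma gdeg_joinOn_inr (b : B) :
    gdeg (joinOn H K P) (.inr b) = Nat.card {a // P a} + gdeg K b := by
  rw [gdeg_eq_card_adj_inl_add_card_adj_inr, gdeg_eq_natCard_neighborSet]
  rfl

end JoinOn

section Subdivision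

variable {V : Type*} [Finite V] (G : SimpleGraph V)

lemma gdeg_Sgraph_inl (v : V) : gdeg (Sgraph G) (.inl v) = gdeg G v := by
  have : IsEmpty {w // (Sgraph G).Adj (.inl v) (.inl w)} := ⟨fun w => w.2⟩
  rw [gdeg_eq_card_adj_inl_add_card_adj_inr, gdeg_eq_natCard_neighborSet, Nat.card_of_isEmpty,
    zero_add]
  classical
  exact Nat.card_congr ((Equiv.subtypeSubtypeEquivSubtypeInter (· ∈ G.edgeSet) (v ∈ ·)).trans
    (G.incidenceSetEquivNeighborSet v))

lemma gdeg_Sgraph_inr (e : G.edgeSet) : gdeg (Sgraph G) (.inr e) = 2 := by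
  have : IsEmpty {f // (Sgraph G).Adj (.inr e) (.inr f)} := ⟨fun f => f.2⟩
  rw [gdeg_eq_card_adj_inl_add_card_adj_inr,
    Nat.card_of_isEmpty (α := {f // (Sgraph G).Adj (.inr e) (.inr f)}), add_zero]
  classical
  rw [← Sym2.card_toFinset_of_not_isDiag _ (G.not_isDiag_of_mem_edgeSet e.2),
    ← Nat.card_eq_finsetCard]
  exact Nat.card_congr (Equiv.subtypeEquivRight fun _ => Sym2.mem_toFinset.symm)

end Subdivision

section EdgeSJoin

variable {V₁ V₂ : Type*} [Finite V₁] [Finite V₂] (G₁ : SimpleGraph V₁) (G₂ : SimpleGraph V₂)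

lemma gdeg_edgeSJoin_inl_inl (v : V₁) :
    gdeg (edgeSJoin G₁ G₂) (.inl (.inl v)) = gdeg G₁ v := by
  rw [edgeSJoin, gdeg_joinOn_inl_of_neg (Sgraph G₁) G₂ _ (a := .inl v) Bool.false_ne_true,
    gdeg_Sgraph_inl]

lemma gdeg_edgeSJoin_inl_inr (e : G₁.edgeSet) :
    gdeg (edgeSJoin G₁ G₂) (.inl (.inr e)) = 2 + Nat.card V₂ := by
  rw [edgeSJoin, gdeg_joinOn_inl_of_pos (Sgraph G₁) G₂ (·.isRight) (a := .inr e) rfl,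
    gdeg_Sgraph_inr]

lemma gdeg_edgeSJoin_inr (w : V₂) :
    gdeg (edgeSJoin G₁ G₂) (.inr w) = numEdges G₁ + gdeg G₂ w := by
  rw [edgeSJoin, gdeg_joinOn_inr, numEdges, Nat.card_congr Equiv.sumIsRight]

end EdgeSJoin

theorem Findex_edgeSJoin {V₁ V₂ : Type*} [Fintype V₁] [Fintype V₂] (G₁ : SimpleGraph V₁)
    (G₂ : SimpleGraph V₂) :
    Findex (edgeSJoin G₁ G₂) = Findex G₁ + numEdges G₁ * (2 + Fintype.card V₂) ^ 3 +
      ∑ w, (numEdges G₁ + gdeg G₂ w) ^ 3 := by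
  classical
  rw [Findex_eq_sum, Fintype.sum_sum_type, Fintype.sum_sum_type, Findex_eq_sum G₁]
  simp only [gdeg_edgeSJoin_inl_inl, gdeg_edgeSJoin_inl_inr, gdeg_edgeSJoin_inr,
    Finset.sum_const, Finset.card_univ, smul_eq_mul, Nat.card_eq_fintype_card, numEdges]

section PathGraph

variable (n : ℕ)

lemma gdeg_pathGraph_zero : gdeg (pathGraph (n + 2)) 0 = 1 := by
  have : (pathGraph (n + 2)).neighborSet 0 = {1} := by
    ext u
    simp only [mem_neighborSet, pathGraph_adj, Set.mem_singleton_iff, Fin.ext_iff, Fin.val_zero,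
      Fin.val_one]
    omega
  rw [gdeg_eq_natCard_neighborSet, Nat.card_coe_set_eq, this, Set.ncard_singleton]

lemma gdeg_pathGraph_last : gdeg (pathGraph (n + 2)) (Fin.last _) = 1 := by
  have : (pathGraph (n + 2)).neighborSet (Fin.last _) = {⟨n, by omega⟩} := by
    ext u
    simp only [mem_neighborSet, pathGraph_adj, Set.mem_singleton_iff, Fin.ext_iff, Fin.val_last]
    omega
  rw [gdeg_eq_natCard_neighborSet, Nat.card_coe_set_eq, this, Set.ncard_singleton]

lemma gdeg_pathGraph_succ_castSucc (i : Fin n) :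
    gdeg (pathGraph (n + 2)) i.castSucc.succ = 2 := by
  have : (pathGraph (n + 2)).neighborSet i.castSucc.succ = {i.castSucc.castSucc, i.succ.succ} := by
    ext u
    simp only [mem_neighborSet, pathGraph_adj, Set.mem_insert_iff, Set.mem_singleton_iff,
      Fin.ext_iff, Fin.val_succ, Fin.val_castSucc]
    omega
  rw [gdeg_eq_natCard_neighborSet, Nat.card_coe_set_eq, this,
    Set.ncard_pair (by simp [Fin.ext_iff]; omega)]

lemma sum_gdeg_pathGraph {M : Type*} [AddCommMonoid M] (f : ℕ → M) :
    ∑ v, f (gdeg (pathGraph (n + 2)) v) = 2 • f 1 + n • f 2 := by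
  rw [Fin.sum_univ_succ, Fin.sum_univ_castSucc, Fin.succ_last]
  simp only [gdeg_pathGraph_zero, gdeg_pathGraph_last, gdeg_pathGraph_succ_castSucc,
    Finset.sum_const, Finset.card_univ, Fintype.card_fin]
  abel

lemma numEdges_pathGraph : numEdges (pathGraph (n + 2)) = n + 1 := by
  classical
  have handshake := sum_gdeg_pathGraph n id
  simp only [id, gdeg_eq_degree, sum_degrees_eq_twice_card_edges, smul_eq_mul] at handshake
  rw [numEdges_eq_card_edgeFinset]
  omega

lemma Findex_pathGraph : Findex (pathGraph (n + 2)) = 8 * n + 2 := by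
  rw [Findex_eq_sum, sum_gdeg_pathGraph n (· ^ 3)]
  ring

end PathGraph

theorem Findex_edgeSJoin_ex11 (n m : ℕ) (hn : 2 ≤ n) (hm : 2 ≤ m) :
    (Findex (edgeSJoin (SimpleGraph.pathGraph n) (SimpleGraph.pathGraph m)) : ℤ) =
      ((n : ℤ) - 1) * (((m : ℤ) + 2) ^ 3 + 6 * ((m : ℤ) - 1) * ((n : ℤ) - 1) + (m : ℤ) * ((n : ℤ) - 1) ^ 2) + 12 * (m : ℤ) * (n : ℤ) - 4 * (m : ℤ) - 10 * (n : ℤ) - 10 := by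
  obtain ⟨a, rfl⟩ : ∃ a, n = a + 2 := ⟨n - 2, by omega⟩
  obtain ⟨b, rfl⟩ : ∃ b, m = b + 2 := ⟨m - 2, by omega⟩
  rw [Findex_edgeSJoin, Findex_pathGraph, numEdges_pathGraph, Fintype.card_fin,
    sum_gdeg_pathGraph b (fun d => (a + 1 + d) ^ 3)]
  push_cast [smul_eq_mul]
  ring
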